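/- arXiv:2211.11352 — 2 statements merged into one kernel-verified Lean document; each statement's English description precedes it below -/
import Mathlib

section
/- Let G₁, G₂, … be a sequence of rooted trees on [n] with self-loops added (each G_i is a directed tree in which some root reaches every node, plus all self-loops). If the product graph G(t) = G₁ ∘ ⋯ ∘ G_t has no node with out-edges to all nodes, then G(t+1) contains strictly more edges than G(t). Consequently, the broadcast time of any such sequence is at most n². -/
/-!
Since every tree carries all self-loops, `G(t) ⊆ G(t+1)`. If equality holds, `G(t)` is closed
under right composition with the tree `G_{t+1}`; as the root `r` has a loop in `G(t)` and reaches
every node in the tree, the edges `(r, y)` propagate along the tree to all of `G(t)`. So until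
some node broadcasts, the edge count grows strictly; it starts at `n` and never exceeds `n²`.
-/

namespace Broadcast

/-- Directed graphs on `[n]` as binary relations on `Fin n`. -/
abbrev DGraph (n : ℕ) := Fin n → Fin n → Prop

/-- The product graph: `(x,y)` is an edge iff there is `z` with `(x,z) ∈ A` and `(z,y) ∈ B`. -/
def gcomp {n : ℕ} (A B : DGraph n) : DGraph n := fun x y => ∃ z, A x z ∧ B z y


/-- `prodUpTo G t` is the product graph `G(t) = G₁ ∘ ⋯ ∘ G_t` (with `G(0)` the identity
relation, i.e. the empty product). -/
def prodUpTo {n : ℕ} (G : ℕ → DGraph n) : ℕ → DGraph n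
  | 0 => Eq
  | t + 1 => gcomp (prodUpTo G t) (G (t + 1))

/-- `G` is a rooted tree on `[n]` with self-loops: self-loops at all nodes, every non-root
node `y` has the edge from its parent `p y`, every edge is a self-loop or a parent edge,
and the root `r` has a directed path to every node. -/
structure IsRootedTree {n : ℕ} (G : DGraph n) (r : Fin n) (p : Fin n → Fin n) : Prop where
  loops : ∀ x, G x x
  parent_edge : ∀ y, y ≠ r → G (p y) y
  parent_ne : ∀ y, y ≠ r → p y ≠ y
  edges : ∀ x y, G x y → x = y ∨ (y ≠ r ∧ x = p y)
  reach : ∀ y, Relation.ReflTransGen G r y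

variable {n : ℕ}

def edgeSet (A : DGraph n) : Set (Fin n × Fin n) := {e | A e.1 e.2}

lemma ncard_edgeSet_le_sq (A : DGraph n) : (edgeSet A).ncard ≤ n ^ 2 := by
  calc (edgeSet A).ncard ≤ (Set.univ : Set (Fin n × Fin n)).ncard :=
        Set.ncard_le_ncard (Set.subset_univ _)
    _ = n ^ 2 := by simp [Set.ncard_univ, sq]

lemma ncard_edgeSet_pos_of_refl {A : DGraph n} (hA : ∀ x, A x x) (x : Fin n) :
    0 < (edgeSet A).ncard :=
  (Set.ncard_pos (Set.toFinite _)).mpr ⟨(x, x), hA x⟩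

lemma gcomp_of_left_of_refl {A B : DGraph n} (hB : ∀ x, B x x) {x y : Fin n} (h : A x y) :
    gcomp A B x y :=
  ⟨y, h, hB y⟩

lemma of_reflTransGen_of_gcomp_imp {A B : DGraph n} (hAB : ∀ x y, gcomp A B x y → A x y)
    {x y z : Fin n} (hxy : A x y) (hyz : Relation.ReflTransGen B y z) : A x z := by
  induction hyz with
  | refl => exact hxy
  | tail _ hbc ih => exact hAB _ _ ⟨_, ih, hbc⟩

lemma IsRootedTree.ncard_edgeSet_lt_gcomp {A G : DGraph n} {r : Fin n} {p : Fin n → Fin n}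
    (hG : IsRootedTree G r p) (hA : ∀ x, A x x) (hno : ¬ ∃ x, ∀ y, A x y) :
    (edgeSet A).ncard < (edgeSet (gcomp A G)).ncard := by
  have hsub : edgeSet A ⊆ edgeSet (gcomp A G) := fun _ h => gcomp_of_left_of_refl hG.loops h
  have hne : edgeSet A ≠ edgeSet (gcomp A G) := by
    intro heq
    have hclosed : ∀ x y, gcomp A G x y → A x y := fun x y h =>
      show (x, y) ∈ edgeSet A from heq ▸ h
    exact hno ⟨r, fun y => of_reflTransGen_of_gcomp_imp hclosed (hA r) (hG.reach y)⟩
  exact Set.ncard_lt_ncard (hsub.ssubset_of_ne hne) (Set.toFinite _)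

lemma prodUpTo_refl {G : ℕ → DGraph n} (hG : ∀ i, 1 ≤ i → ∀ x, G i x x) (t : ℕ) (x : Fin n) :
    prodUpTo G t x x := by
  induction t with
  | zero => rfl
  | succ t ih => exact gcomp_of_left_of_refl (hG (t + 1) (by omega)) ih

lemma exists_le_of_forall_not_imp_lt_succ {f : ℕ → ℕ} {P : ℕ → Prop} {N : ℕ} (h0 : 0 < f 0)
    (hN : f N ≤ N) (hstep : ∀ k, ¬ P k → f k < f (k + 1)) : ∃ k ≤ N, P k := by
  by_contra! hP
  have hgrowth : ∀ k ≤ N, f 0 + k ≤ f k := by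
    intro k
    induction k with
    | zero => simp
    | succ k ih =>
      intro hk
      have := hstep k (hP k (by omega))
      have := ih (by omega)
      omega
  have := hgrowth N le_rfl
  omega

/-- For a sequence of rooted trees with self-loops: if the product `G(t)` has no node with
out-edges to all nodes, then `G(t+1)` has strictly more edges than `G(t)`. Consequently,
the broadcast time of any such sequence is at most `n²`. -/
theorem edge_increase_and_quadratic_bound {n : ℕ} (G : ℕ → DGraph n)
    (htree : ∀ i, 1 ≤ i → ∃ r p, IsRootedTree (G i) r p) :
    (∀ t, (¬ ∃ x : Fin n, ∀ y, prodUpTo G t x y) →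
      {e : Fin n × Fin n | prodUpTo G t e.1 e.2}.ncard <
        {e : Fin n × Fin n | prodUpTo G (t + 1) e.1 e.2}.ncard) ∧
    (∃ t, t ≤ n ^ 2 ∧ ∃ x : Fin n, ∀ y, prodUpTo G t x y) := by
  have hloops : ∀ i, 1 ≤ i → ∀ x, G i x x := fun i hi => by
    obtain ⟨r, p, hG⟩ := htree i hi
    exact hG.loops
  have hgrow : ∀ t, (¬ ∃ x : Fin n, ∀ y, prodUpTo G t x y) →
      (edgeSet (prodUpTo G t)).ncard < (edgeSet (prodUpTo G (t + 1))).ncard := by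
    intro t hno
    obtain ⟨r, p, hG⟩ := htree (t + 1) (by omega)
    exact hG.ncard_edgeSet_lt_gcomp (prodUpTo_refl hloops t) hno
  refine ⟨hgrow, ?_⟩
  obtain ⟨r, -⟩ := htree 1 le_rfl
  exact exists_le_of_forall_not_imp_lt_succ
    (ncard_edgeSet_pos_of_refl (prodUpTo_refl hloops 0) r) (ncard_edgeSet_le_sq _) hgrow

end Broadcast
end

section
/- If G₁, G₂, … is a sequence of rooted trees on [n] with self-loops, then the broadcast time is finite: there exists t ≤ n² such that some node x has (x,y) ∈ G₁ ∘ ⋯ ∘ G_t for every node y. -/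
namespace Broadcast

/-- For any sequence of rooted trees on `[n]` with self-loops, the broadcast time is
finite: there is `t ≤ n²` such that some node has an edge to every node in
`G₁ ∘ ⋯ ∘ G_t`. -/
theorem broadcast_finite {n : ℕ} (hn : 1 ≤ n) (G : ℕ → DGraph n)
    (htree : ∀ i, 1 ≤ i → ∃ r p, IsRootedTree (G i) r p) :
    ∃ t, t ≤ n ^ 2 ∧ ∃ x : Fin n, ∀ y, prodUpTo G t x y := by
  classical
  by_contra hcon
  push_neg at hcon
  set T : ℕ → Fin n → Finset (Fin n) :=
    fun t y => Finset.univ.filter (fun x => prodUpTo G t x y) with hT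
  have hmemT : ∀ t y x, x ∈ T t y ↔ prodUpTo G t x y := by
    intro t y x; simp [hT]
  have hmono : ∀ t y, T t y ⊆ T (t + 1) y := by
    intro t y x hx
    obtain ⟨r, p, ht⟩ := htree (t + 1) (by omega)
    rw [hmemT] at hx ⊢
    exact ⟨y, hx, ht.loops y⟩
  have hrefl : ∀ t (x : Fin n), prodUpTo G t x x := by
    intro t x
    induction t with
    | zero => rfl
    | succ t ih =>
      obtain ⟨r, p, ht⟩ := htree (t + 1) (by omega)
      exact ⟨x, ih, ht.loops x⟩
  set f : ℕ → ℕ := fun t => ∑ y, (T t y).card with hf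
  have hstep : ∀ t, t ≤ n ^ 2 → f t + 1 ≤ f (t + 1) := by
    intro t ht
    by_contra hle
    push_neg at hle
    have hle' : f (t + 1) ≤ f t := by omega
    have hcards : ∀ y ∈ Finset.univ, (T t y).card ≤ (T (t + 1) y).card :=
      fun y _ => Finset.card_le_card (hmono t y)
    have hge : f t ≤ f (t + 1) := Finset.sum_le_sum hcards
    have heq : ∀ y, T (t + 1) y = T t y := by
      have hall := (Finset.sum_eq_sum_iff_of_le hcards).mp (le_antisymm hge hle')
      intro y
      exact (Finset.eq_of_subset_of_card_le (hmono t y)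
        (le_of_eq (hall y (Finset.mem_univ y)).symm)).symm
    obtain ⟨r, p, htr⟩ := htree (t + 1) (by omega)
    have hsub : ∀ y, Relation.ReflTransGen (G (t + 1)) r y → T t r ⊆ T t y := by
      intro y hy
      induction hy with
      | refl => exact subset_rfl
      | @tail b c hab hedge ih =>
        rcases htr.edges _ _ hedge with h1 | ⟨hne, hpar⟩
        · exact h1 ▸ ih
        · refine ih.trans ?_
          intro x hx
          rw [← heq]
          rw [hmemT] at hx ⊢
          exact ⟨b, hx, hedge⟩
    have : ∀ y, prodUpTo G t r y := by
      intro y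
      have := hsub y (htr.reach y) ((hmemT t r r).mpr (hrefl t r))
      exact (hmemT t y r).mp this
    obtain ⟨y, hy⟩ := hcon t ht r
    exact hy (this y)
  have hlow : ∀ t, t ≤ n ^ 2 → n + t ≤ f t := by
    intro t
    induction t with
    | zero =>
      intro _
      have : f 0 = n := by
        have : ∀ y : Fin n, (T 0 y).card = 1 := by
          intro y
          have : T 0 y = {y} := by
            ext x; rw [hmemT]; simp [prodUpTo]
          simp [this]
        simp [hf, this]
      omega
    | succ t ih =>
      intro ht
      have h1 := hstep t (by omega)
      have h2 := ih (by omega)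
      omega
  have hub : f (n ^ 2) ≤ n ^ 2 := by
    calc f (n ^ 2) ≤ ∑ _y : Fin n, n :=
          Finset.sum_le_sum (fun y _ => by
            simpa using Finset.card_le_card (Finset.subset_univ (T (n ^ 2) y)))
      _ = n * n := by simp [mul_comm]
      _ = n ^ 2 := (sq n).symm
  have := hlow (n ^ 2) le_rfl
  omega

end Broadcast
end
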